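/- Proposition (regular points have non-critical orbits): For every e ∈ ℰ there exists λ₀ > 0 such that for all 0 < λ < λ₀: if z ∈ X^e is regular, then the return orbit O_τ(z) is not critical, i.e. there exist no w ∈ O_τ(z) and m, n ∈ ℤ with R(w) = (m,n) such that R(F_λ⁴(w)) differs from (m,n) in both coordinates (that is, R(F_λ⁴(w)) = (m±1, n±1)). -/

import Mathlib

open scoped Classical

noncomputable section

open Set

/-- The scaled round-off map `F_λ` on the plane: `F_λ(z) = λ·F(z/λ)`,
so `F_λ(z) = (λ⌊z₁⌋ − z₂, z₁)`. -/
def Fl (lam : ℝ) (z : ℝ × ℝ) : ℝ × ℝ := (lam * (⌊z.1⌋ : ℝ) - z.2, z.1)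

/-- The inverse of `F_λ`. -/
def Flinv (lam : ℝ) (z : ℝ × ℝ) : ℝ × ℝ := (z.2, lam * (⌊z.2⌋ : ℝ) - z.1)

/-- Integer iterate `F_λ^k`, `k ∈ ℤ`. -/
def FlIter (lam : ℝ) (k : ℤ) (z : ℝ × ℝ) : ℝ × ℝ :=
  if 0 ≤ k then (Fl lam)^[k.toNat] z else (Flinv lam)^[(-k).toNat] z

/-- Membership in the scaled lattice `(λℤ)²`. -/
def IsLatticePt (lam : ℝ) (z : ℝ × ℝ) : Prop := ∃ a b : ℤ, z = (lam * a, lam * b)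

/-- The discrete vector field `𝐯(z) = F_λ⁴(z) − z`. -/
def vfield (lam : ℝ) (z : ℝ × ℝ) : ℝ × ℝ := (Fl lam)^[4] z - z

/-- The auxiliary (integrable) vector field `𝐰`. -/
def wfield (lam : ℝ) (z : ℝ × ℝ) : ℝ × ℝ :=
  (lam * (2 * (⌊z.2⌋ : ℝ) + 1), -(lam * (2 * (⌊z.1⌋ : ℝ) + 1)))

/-- The constant value `𝐰_{m,n}` of `𝐰` on the box `B_{m,n}`. -/
def wmn (lam : ℝ) (m n : ℤ) : ℝ × ℝ :=
  (lam * (2 * (n : ℝ) + 1), -(lam * (2 * (m : ℝ) + 1)))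

/-- The piecewise-affine function `P(x) = ⌊x⌋² + (2⌊x⌋+1)(x − ⌊x⌋)`. -/
def Pfun (x : ℝ) : ℝ := (⌊x⌋ : ℝ) ^ 2 + (2 * (⌊x⌋ : ℝ) + 1) * (x - (⌊x⌋ : ℝ))

/-- The Hamiltonian `𝒫(x,y) = P(x) + P(y)`. -/
def Ham (z : ℝ × ℝ) : ℝ := Pfun z.1 + Pfun z.2

/-- The round Hamiltonian `𝒬(x,y) = x² + y²`. -/
def Qfun (z : ℝ × ℝ) : ℝ := z.1 ^ 2 + z.2 ^ 2

/-- The level set `Π(z)` of `𝒫` through `z`. -/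
def levelSet (z : ℝ × ℝ) : Set (ℝ × ℝ) := {w | Ham w = Ham z}

/-- The grid `Δ` of horizontal and vertical integer lines. -/
def DeltaSet : Set (ℝ × ℝ) := {z | (∃ m : ℤ, z.1 = (m : ℝ)) ∨ (∃ n : ℤ, z.2 = (n : ℝ))}

/-- The box `B_{m,n}`. -/
def Bbox (m n : ℤ) : Set (ℝ × ℝ) := {z | ⌊z.1⌋ = m ∧ ⌊z.2⌋ = n}

/-- The lattice `ℤ² ⊂ ℝ²`. -/
def intLattice : Set (ℝ × ℝ) := {z | ∃ a b : ℤ, z = ((a : ℝ), (b : ℝ))}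

/-- `r(c)`: the number of representations of `c` as a sum of two integer squares. -/
def rfun (c : ℝ) : ℕ := Set.ncard {p : ℤ × ℤ | ((p.1 : ℝ)) ^ 2 + ((p.2 : ℝ)) ^ 2 = c}

/-- Euclidean distance from `z` to the symmetry line `y = x`. -/
def dG (z : ℝ × ℝ) : ℝ := |z.1 - z.2| / Real.sqrt 2

/-- The integer round-off `R`. -/
def Rfl (z : ℝ × ℝ) : ℤ × ℤ := (⌊z.1⌋, ⌊z.2⌋)

/-- The rescaled round-off `R_λ(w) = λ·R(w/λ)`. -/
def Rlam (lam : ℝ) (w : ℝ × ℝ) : ℝ × ℝ :=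
  (lam * (⌊w.1 / lam⌋ : ℝ), lam * (⌊w.2 / lam⌋ : ℝ))

/-- The return domain `X`. -/
def Xdom (lam : ℝ) : Set (ℝ × ℝ) :=
  {z | IsLatticePt lam z ∧ 0 ≤ z.1 ∧ 0 ≤ z.2 ∧
    dG z ≤ dG ((Fl lam)^[4] z) ∧ dG z < dG ((Flinv lam)^[4] z)}

/-- Forward transit time `τ` to `X`. -/
def tau (lam : ℝ) (z : ℝ × ℝ) : ℕ := sInf {k : ℕ | 1 ≤ k ∧ (Fl lam)^[k] z ∈ Xdom lam}

/-- Backward transit time `τ₋` to `X`. -/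
def tauMinus (lam : ℝ) (z : ℝ × ℝ) : ℕ := sInf {k : ℕ | (Flinv lam)^[k] z ∈ Xdom lam}

/-- The return orbit `O_τ(z)`. -/
def returnOrbit (lam : ℝ) (z : ℝ × ℝ) : Set (ℝ × ℝ) :=
  {w | ∃ k : ℤ, -(tauMinus lam z : ℤ) ≤ k ∧ k ≤ (tau lam z : ℤ) ∧ w = FlIter lam k z}

/-- The first-return map `Φ`. -/
def Phi (lam : ℝ) (z : ℝ × ℝ) : ℝ × ℝ := (Fl lam)^[tau lam z] z

/-- The full orbit `O(z) = {F_λ^t(z) : t ∈ ℤ}`. -/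
def fullOrbit (lam : ℝ) (z : ℝ × ℝ) : Set (ℝ × ℝ) := {w | ∃ t : ℤ, w = FlIter lam t z}

/-- The set `Λ` of transition points. -/
def TransSet (lam : ℝ) : Set (ℝ × ℝ) :=
  {z | IsLatticePt lam z ∧ Rfl ((Fl lam)^[4] z) ≠ Rfl z}

/-- The set `Σ = ⋃ Σ_{m,n}`. -/
def SigmaSet (lam : ℝ) : Set (ℝ × ℝ) :=
  {z | z ∈ TransSet lam ∧ ∃ m n : ℤ,
    max |z.1 - (m : ℝ)| |z.2 - (n : ℝ)| ≤
      lam * (max |2 * (m : ℝ) + 1| |2 * (n : ℝ) + 1| + 2)}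

/-- `ℰ`: the natural numbers which are sums of two integer squares. -/
def Eset : Set ℕ := {n | ∃ a b : ℤ, (n : ℤ) = a ^ 2 + b ^ 2}

/-- The successor of `e` in `ℰ`. -/
def nextE (e : ℕ) : ℕ := sInf {f | f ∈ Eset ∧ e < f}

/-- The critical interval `I^e = (e, e′)`. -/
def Icrit (e : ℕ) : Set ℝ := Set.Ioo (e : ℝ) (nextE e : ℝ)

/-- The set `X^e`. -/
def Xe (lam : ℝ) (e : ℕ) : Set (ℝ × ℝ) :=
  {z | z ∈ Xdom lam ∧ ∀ w ∈ returnOrbit lam z, Ham w ∈ Icrit e}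

/-- A point of `X^e` is regular if it is not a transition point and its return
orbit avoids `Σ`. -/
def IsRegularPt (lam : ℝ) (e : ℕ) (z : ℝ × ℝ) : Prop :=
  z ∈ Xe lam e ∧ z ∉ TransSet lam ∧ returnOrbit lam z ∩ SigmaSet lam = ∅

/-- `J` is a maximal subinterval `Ĩ^e(λ)` of `I^e` on which all points of `X^e`
are regular. -/
def IsMaxRegInterval (lam : ℝ) (e : ℕ) (J : Set ℝ) : Prop :=
  J ⊆ Icrit e ∧ J.OrdConnected ∧
    (∀ z ∈ Xe lam e, Ham z ∈ J → IsRegularPt lam e z) ∧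
    ∀ J' : Set ℝ, J ⊆ J' → J' ⊆ Icrit e → J'.OrdConnected →
      (∀ z ∈ Xe lam e, Ham z ∈ J' → IsRegularPt lam e z) → J' = J

/-- The regular domain `X̃^e` determined by the interval `J = Ĩ^e(λ)`. -/
def Xtilde (lam : ℝ) (e : ℕ) (J : Set ℝ) : Set (ℝ × ℝ) :=
  {z | z ∈ Xe lam e ∧ Ham z ∈ J}

/-- The type of a vertex: the floor of the absolute value of its non-integer
coordinate. -/
def vtype (z : ℝ × ℝ) : ℕ :=
  if ∃ m : ℤ, z.1 = (m : ℝ) then (⌊|z.2|⌋).toNat else (⌊|z.1|⌋).toNat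

/-- `v` (1-indexed, entries `v 1, …, v k` with `k = ⌊√e⌋+1`) is the vertex list
of the polygon class of `e`, and `o j` records whether the `j`-th vertex lies on
a horizontal lattice line (i.e. has integer `y`-coordinate): for every value
`a ∈ I^e`, the vertices of the level polygon `{𝒫 = a}` lying in the first octant,
enumerated clockwise (i.e. by increasing `x`-coordinate), have types
`v 1, …, v k`. -/
def IsVertexList (e : ℕ) (v : ℕ → ℕ) (o : ℕ → Bool) : Prop :=
  ∀ a ∈ Icrit e, ∃ p : ℕ → ℝ × ℝ,
    (∀ j, 1 ≤ j → j ≤ Nat.sqrt e + 1 →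
      Ham (p j) = a ∧ p j ∈ DeltaSet ∧ 0 ≤ (p j).2 ∧ (p j).2 ≤ (p j).1 ∧
        vtype (p j) = v j ∧ (o j = true ↔ ∃ n : ℤ, (p j).2 = (n : ℝ))) ∧
    (∀ i j, 1 ≤ i → i < j → j ≤ Nat.sqrt e + 1 → (p i).1 < (p j).1) ∧
    (∀ w : ℝ × ℝ, Ham w = a → w ∈ DeltaSet → 0 ≤ w.2 → w.2 ≤ w.1 →
      ∃ j, 1 ≤ j ∧ j ≤ Nat.sqrt e + 1 ∧ w = p j)

/-- The extended vertex list: `v_j = v_{2k−j}` for `k < j ≤ 2k−1`. -/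
def vext (e : ℕ) (v : ℕ → ℕ) (j : ℕ) : ℕ :=
  if j ≤ Nat.sqrt e + 1 then v j else v (2 * (Nat.sqrt e + 1) - j)

/-- The extended orientation list. -/
def oext (e : ℕ) (o : ℕ → Bool) (j : ℕ) : Bool :=
  if j ≤ Nat.sqrt e + 1 then o j else o (2 * (Nat.sqrt e + 1) - j)

/-- The recursively defined integers `q_j` (here `v` is the extended vertex list):
`q₁ = (2v₁+1)²`, `q_j = q_{j−1}` if `v_j = v_{j−1}`, and
`q_j = lcm((2v_j+1)(2v_{j−1}+1), q_{j−1})` otherwise. -/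
def qseq (v : ℕ → ℕ) : ℕ → ℕ
  | 0 => (2 * v 1 + 1) ^ 2
  | 1 => (2 * v 1 + 1) ^ 2
  | j + 2 =>
    if v (j + 2) = v (j + 1) then qseq v (j + 1)
    else Nat.lcm ((2 * v (j + 2) + 1) * (2 * v (j + 1) + 1)) (qseq v (j + 1))

/-- `p_j = q_j/(2v_j+1)`. -/
def pseq (v : ℕ → ℕ) (j : ℕ) : ℕ := qseq v j / (2 * v j + 1)

/-- `q = q_{2k−1}`. -/
def qval (e : ℕ) (v : ℕ → ℕ) : ℕ := qseq (vext e v) (2 * (Nat.sqrt e + 1) - 1)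

/-- The vector `L_j = (λ q_j/(2v₁+1))·(1,1)`. -/
def Lvec (lam : ℝ) (v1 : ℕ) (qj : ℕ) : ℝ × ℝ :=
  (lam * (qj : ℝ) / (2 * (v1 : ℝ) + 1), lam * (qj : ℝ) / (2 * (v1 : ℝ) + 1))

/-- The lattice `𝕃 = ℤ·L_j + ℤ·((L_j − 𝐰_{v₁,v₁})/2)` as an additive subgroup
of `ℝ²`. -/
def latticeL (lam : ℝ) (v1 : ℕ) (qj : ℕ) : AddSubgroup (ℝ × ℝ) :=
  AddSubgroup.closure
    {Lvec lam v1 qj, (2⁻¹ : ℝ) • (Lvec lam v1 qj - wmn lam (v1 : ℤ) (v1 : ℤ))}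

/-- Forward transit time of `F_λ⁴` to `Λ`. -/
def tTrans (lam : ℝ) (z : ℝ × ℝ) : ℕ :=
  sInf {i : ℕ | 1 ≤ i ∧ (Fl lam)^[4 * i] z ∈ TransSet lam}

/-- The strip map `Ψ(z) = F_λ^{4t(z)}(z)`. -/
def Psi (lam : ℝ) (z : ℝ × ℝ) : ℝ × ℝ := (Fl lam)^[4 * tTrans lam z] z

/-- Backward transit time of `F_λ⁻⁴` to `Λ`. -/
def sTrans (lam : ℝ) (z : ℝ × ℝ) : ℕ :=
  sInf {i : ℕ | 1 ≤ i ∧ (Flinv lam)^[4 * i] z ∈ TransSet lam}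

/-- The inverse strip map `Ψ⁻¹`. -/
def PsiInv (lam : ℝ) (z : ℝ × ℝ) : ℝ × ℝ := (Flinv lam)^[4 * sTrans lam z] z

/-- `Ψ^j` for `j ∈ {−1} ∪ ℕ`. -/
def PsiPow (lam : ℝ) (j : ℤ) (z : ℝ × ℝ) : ℝ × ℝ :=
  if j < 0 then PsiInv lam z else (Psi lam)^[j.toNat] z

/-- The coordinate unit vector in the non-integer direction of a vertex lying
on a horizontal (`horiz = true`) resp. vertical lattice line. -/
def evec (horiz : Bool) : ℝ × ℝ := if horiz then (1, 0) else (0, 1)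

/-- `s ∈ {0, …, 2v_j}` is the code entry at a vertex point `w` of type `vj`: if
the vertex lies on a horizontal line `y = n` then, writing
`w = λ(⌈v_j/λ⌉ + x_j, ⌈n/λ⌉ + y_j)` with `|y_j| < 2v_j+1`, `s ≡ y_j (mod 2v_j+1)`;
analogously in the vertical case. -/
def CodeAt (lam : ℝ) (vj : ℕ) (horiz : Bool) (w : ℝ × ℝ) (s : ℤ) : Prop :=
  0 ≤ s ∧ s < 2 * (vj : ℤ) + 1 ∧
    (if horiz then
        ∃ n Y yj : ℤ, w.2 = lam * (Y : ℝ) ∧ Y = ⌈(n : ℝ) / lam⌉ + yj ∧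
          |yj| < 2 * (vj : ℤ) + 1 ∧ s ≡ yj [ZMOD (2 * (vj : ℤ) + 1)]
      else
        ∃ m X xj : ℤ, w.1 = lam * (X : ℝ) ∧ X = ⌈(m : ℝ) / lam⌉ + xj ∧
          |xj| < 2 * (vj : ℤ) + 1 ∧ s ≡ xj [ZMOD (2 * (vj : ℤ) + 1)])

/-- `σ` is the orbit code `(σ₋₁, σ₁, …, σ_{2k−1})` of `z`. -/
def IsOrbitCode (lam : ℝ) (e : ℕ) (v : ℕ → ℕ) (o : ℕ → Bool) (z : ℝ × ℝ)
    (σ : ℤ → ℤ) : Prop :=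
  CodeAt lam (v 1) (!(o 1)) (PsiInv lam z) (σ (-1)) ∧
    ∀ j : ℕ, 1 ≤ j → j ≤ 2 * (Nat.sqrt e + 1) - 1 →
      CodeAt lam (vext e v j) (oext e o j) ((Psi lam)^[j] z) (σ (j : ℤ))

/-- The Euclidean norm on `ℝ²`. -/
def enorm2 (z : ℝ × ℝ) : ℝ := Real.sqrt (z.1 ^ 2 + z.2 ^ 2)

/-- The rotation number `ν(λ) = arccos(λ/2)/(2π)`. -/
def nuRot (lam : ℝ) : ℝ := Real.arccos (lam / 2) / (2 * Real.pi)

/-- Distance from a real number to the nearest integer. -/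
def distInt (x : ℝ) : ℝ := |x - (round x : ℝ)|

/-- The first-order recurrence time `t*(λ)`. -/
def tstar (lam : ℝ) : ℕ :=
  sInf {k : ℕ | 1 ≤ k ∧ distInt ((k : ℝ) * nuRot lam) < distInt (4 * nuRot lam)}

/-- The square `A(r,λ)` of lattice points. -/
def Aset (r lam : ℝ) : Set (ℝ × ℝ) := {z | IsLatticePt lam z ∧ max |z.1| |z.2| < r}

end

/-! On four steps `F_λ⁴` moves `z = (x, y)` by `λ (⌊x₃⌋ - ⌊x₁⌋, ⌊x₂⌋ - ⌊x⌋)`, where `x₁, x₂, x₃`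
are the first coordinates of `F_λ z, F_λ² z, F_λ³ z`; on a bounded level set of `𝒫` this is
small once `λ` is. If both floors of `z` change, `z` lies within that displacement of a lattice
corner `(M, N)`; then `x₁ ≈ -N` and `x₂ ≈ -M`, so the displacement is at most
`λ (|2N + 1| + 2, |2M + 1| + 2)`. Hence `z ∈ Σ_{M,N}`, which the orbit of a regular point avoids. -/

theorem mapsTo_Fl_lattice (lam : ℝ) :
    Set.MapsTo (Fl lam) {z | IsLatticePt lam z} {z | IsLatticePt lam z} := by
  rintro _ ⟨a, b, rfl⟩
  exact ⟨⌊lam * (a : ℝ)⌋ - b, a, by simp only [Fl]; push_cast; ring_nf⟩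

theorem mapsTo_Flinv_lattice (lam : ℝ) :
    Set.MapsTo (Flinv lam) {z | IsLatticePt lam z} {z | IsLatticePt lam z} := by
  rintro _ ⟨a, b, rfl⟩
  exact ⟨b, ⌊lam * (b : ℝ)⌋ - a, by simp only [Flinv]; push_cast; ring_nf⟩

theorem IsLatticePt.flIter {lam : ℝ} {z : ℝ × ℝ} (hz : IsLatticePt lam z) (k : ℤ) :
    IsLatticePt lam (FlIter lam k z) := by
  unfold FlIter
  split
  · exact (mapsTo_Fl_lattice lam).iterate _ hz
  · exact (mapsTo_Flinv_lattice lam).iterate _ hz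

theorem abs_intFloor_le (t : ℝ) : |(⌊t⌋ : ℝ)| ≤ |t| + 1 := by
  rw [abs_le]
  constructor <;> linarith [Int.floor_le t, Int.lt_floor_add_one t, neg_abs_le t, le_abs_self t]

theorem sq_le_Pfun (x : ℝ) : x ^ 2 ≤ Pfun x := by
  unfold Pfun
  nlinarith [Int.floor_le x, Int.lt_floor_add_one x]

theorem abs_le_of_Ham_lt {z : ℝ × ℝ} {K : ℝ} (h : Ham z < K) :
    |z.1| ≤ K + 1 ∧ |z.2| ≤ K + 1 := by
  unfold Ham at h
  have h1 := sq_le_Pfun z.1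
  have h2 := sq_le_Pfun z.2
  have hK : 0 ≤ K + 1 := by nlinarith
  constructor <;> refine abs_le_of_sq_le_sq ?_ hK <;> nlinarith

theorem exists_int_between_of_floor_ne {u u' : ℝ} (hne : ⌊u⌋ ≠ ⌊u'⌋) (h : |u' - u| < 1) :
    ∃ N : ℤ, |u - N| ≤ |u' - u| ∧ N - 1 ≤ ⌊u⌋ ∧ ⌊u⌋ ≤ N ∧ N - 1 ≤ ⌊u'⌋ ∧ ⌊u'⌋ ≤ N := by
  obtain ⟨hl, hr⟩ := abs_lt.mp h
  have h₁ : ⌊u'⌋ < ⌊u⌋ + 2 := Int.floor_lt.mpr (by push_cast; linarith [Int.lt_floor_add_one u])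
  have h₂ : ⌊u⌋ < ⌊u'⌋ + 2 := Int.floor_lt.mpr (by push_cast; linarith [Int.lt_floor_add_one u'])
  rcases hne.lt_or_gt with hlt | hgt
  · refine ⟨⌊u'⌋, ?_, by omega, hlt.le, by omega, le_rfl⟩
    have : (⌊u'⌋ : ℝ) ≤ u' := Int.floor_le u'
    have : u < ⌊u'⌋ := Int.floor_lt.mp hlt
    rw [abs_of_neg (by linarith), abs_of_pos (by linarith)]
    linarith
  · refine ⟨⌊u⌋, ?_, by omega, le_rfl, by omega, hgt.le⟩
    have : (⌊u⌋ : ℝ) ≤ u := Int.floor_le u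
    have : u' < ⌊u⌋ := Int.floor_lt.mp hgt
    rw [abs_of_nonneg (by linarith), abs_of_neg (by linarith)]
    linarith

theorem floor_sub_bounds {u c : ℝ} {N : ℤ} (h : |u - N| + |c| < 1) :
    -N - 1 ≤ ⌊c - u⌋ ∧ ⌊c - u⌋ ≤ -N := by
  have hu := abs_le.mp (le_refl |u - N|)
  have hc := abs_le.mp (le_refl |c|)
  constructor
  · exact Int.le_floor.mpr (by push_cast; linarith)
  · exact Int.lt_add_one_iff.mp (Int.floor_lt.mpr (by push_cast; linarith))

theorem abs_intCast_sub_le {p q N : ℤ} (hp₁ : N - 1 ≤ p) (hp₂ : p ≤ N) (hq₁ : -N - 1 ≤ q)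
    (hq₂ : q ≤ -N) : |(p : ℝ) - q| ≤ |2 * (N : ℝ) + 1| + 2 := by
  have hp₁' : (N : ℝ) - 1 ≤ p := by exact_mod_cast hp₁
  have hp₂' : (p : ℝ) ≤ N := by exact_mod_cast hp₂
  have hq₁' : -(N : ℝ) - 1 ≤ q := by exact_mod_cast hq₁
  have hq₂' : (q : ℝ) ≤ -N := by exact_mod_cast hq₂
  rw [abs_le]
  constructor <;> linarith [le_abs_self (2 * (N : ℝ) + 1), neg_abs_le (2 * (N : ℝ) + 1)]

theorem Fl_iterate_four {lam x y x₁ x₂ x₃ : ℝ} (h₁ : x₁ = lam * ⌊x⌋ - y)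
    (h₂ : x₂ = lam * ⌊x₁⌋ - x) (h₃ : x₃ = lam * ⌊x₂⌋ - x₁) :
    (Fl lam)^[4] (x, y) = (lam * ⌊x₃⌋ - x₂, x₃) := by
  subst h₁ h₂ h₃
  rfl

theorem abs_lam_mul_floor_lt {lam K t : ℝ} (hlam : 0 < lam) (hsmall : 4 * lam * (K + 3) < 1)
    (ht : |t| ≤ K + 2) : |lam * ⌊t⌋| < 1 / 4 := by
  rw [abs_mul, abs_of_pos hlam]
  nlinarith [abs_intFloor_le t]

theorem abs_lam_mul_floor_orbit_lt {lam K x y x₁ x₂ x₃ : ℝ} (hlam : 0 < lam)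
    (hsmall : 4 * lam * (K + 3) < 1) (hx : |x| ≤ K) (hy : |y| ≤ K) (h₁ : x₁ = lam * ⌊x⌋ - y)
    (h₂ : x₂ = lam * ⌊x₁⌋ - x) (h₃ : x₃ = lam * ⌊x₂⌋ - x₁) :
    |lam * ⌊x⌋| < 1 / 4 ∧ |lam * ⌊x₁⌋| < 1 / 4 ∧ |lam * ⌊x₂⌋| < 1 / 4 ∧ |lam * ⌊x₃⌋| < 1 / 4 := by
  have e₀ := abs_lam_mul_floor_lt hlam hsmall (t := x) (by linarith)
  have b₁ : |x₁| ≤ K + 1 := by rw [h₁]; linarith [abs_sub (lam * ⌊x⌋) y]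
  have e₁ := abs_lam_mul_floor_lt hlam hsmall (t := x₁) (by linarith)
  have b₂ : |x₂| ≤ K + 1 := by rw [h₂]; linarith [abs_sub (lam * ⌊x₁⌋) x]
  have e₂ := abs_lam_mul_floor_lt hlam hsmall (t := x₂) (by linarith)
  have b₃ : |x₃| ≤ K + 2 := by rw [h₃]; linarith [abs_sub (lam * ⌊x₂⌋) x₁]
  exact ⟨e₀, e₁, e₂, abs_lam_mul_floor_lt hlam hsmall b₃⟩

theorem exists_corner_of_critical {lam K x y : ℝ} (hlam : 0 < lam) (hsmall : 4 * lam * (K + 3) < 1)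
    (hx : |x| ≤ K) (hy : |y| ≤ K) (hcx : ⌊((Fl lam)^[4] (x, y)).1⌋ ≠ ⌊x⌋)
    (hcy : ⌊((Fl lam)^[4] (x, y)).2⌋ ≠ ⌊y⌋) :
    ∃ M N : ℤ, |x - M| ≤ lam * (|2 * (N : ℝ) + 1| + 2) ∧
      |y - N| ≤ lam * (|2 * (M : ℝ) + 1| + 2) := by
  set x₁ := lam * ⌊x⌋ - y with h₁
  set x₂ := lam * ⌊x₁⌋ - x with h₂
  set x₃ := lam * ⌊x₂⌋ - x₁ with h₃
  rw [Fl_iterate_four h₁ h₂ h₃] at hcx hcy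
  obtain ⟨e₀, e₁, e₂, e₃⟩ := abs_lam_mul_floor_orbit_lt hlam hsmall hx hy h₁ h₂ h₃
  have hdx : lam * ⌊x₃⌋ - x₂ - x = lam * (⌊x₃⌋ - ⌊x₁⌋) := by rw [h₂]; ring
  have hdy : x₃ - y = lam * (⌊x₂⌋ - ⌊x⌋) := by rw [h₃, h₁]; ring
  have hdx' : |lam * ⌊x₃⌋ - x₂ - x| < 1 / 2 := by
    rw [hdx, mul_sub]; linarith [abs_sub (lam * ⌊x₃⌋) (lam * ⌊x₁⌋)]
  have hdy' : |x₃ - y| < 1 / 2 := by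
    rw [hdy, mul_sub]; linarith [abs_sub (lam * ⌊x₂⌋) (lam * ⌊x⌋)]
  obtain ⟨M, hxM, hM₁, hM₂, -, -⟩ := exists_int_between_of_floor_ne hcx.symm (by linarith)
  obtain ⟨N, hyN, -, -, hN₁, hN₂⟩ := exists_int_between_of_floor_ne hcy.symm (by linarith)
  -- `x₁ ≈ -y ≈ -N` and `x₂ ≈ -x ≈ -M`, because `λ⌊x⌋` and `λ⌊x₁⌋` are small
  obtain ⟨hx₁₁, hx₁₂⟩ := floor_sub_bounds (u := y) (c := lam * ⌊x⌋) (N := N) (by linarith)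
  obtain ⟨hx₂₁, hx₂₂⟩ := floor_sub_bounds (u := x) (c := lam * ⌊x₁⌋) (N := M) (by linarith)
  refine ⟨M, N, hxM.trans ?_, hyN.trans ?_⟩
  · rw [hdx, abs_mul, abs_of_pos hlam]
    exact mul_le_mul_of_nonneg_left (abs_intCast_sub_le hN₁ hN₂ hx₁₁ hx₁₂) hlam.le
  · rw [hdy, abs_mul, abs_of_pos hlam, abs_sub_comm]
    exact mul_le_mul_of_nonneg_left (abs_intCast_sub_le hM₁ hM₂ hx₂₁ hx₂₂) hlam.le

theorem mem_SigmaSet_of_critical {lam K : ℝ} {z : ℝ × ℝ} (hlam : 0 < lam)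
    (hsmall : 4 * lam * (K + 3) < 1) (hx : |z.1| ≤ K) (hy : |z.2| ≤ K) (hz : IsLatticePt lam z)
    (hcx : ⌊((Fl lam)^[4] z).1⌋ ≠ ⌊z.1⌋) (hcy : ⌊((Fl lam)^[4] z).2⌋ ≠ ⌊z.2⌋) :
    z ∈ SigmaSet lam := by
  obtain ⟨M, N, hM, hN⟩ := exists_corner_of_critical hlam hsmall hx hy hcx hcy
  refine ⟨⟨hz, fun h ↦ hcx (congrArg Prod.fst h)⟩, M, N, max_le (hM.trans ?_) (hN.trans ?_)⟩ <;>
    gcongr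
  exacts [le_max_right _ _, le_max_left _ _]

theorem regular_points_noncritical_orbits_general (e : ℕ) :
    ∃ lam0 > (0 : ℝ), ∀ lam : ℝ, 0 < lam → lam < lam0 →
      ∀ z : ℝ × ℝ, IsRegularPt lam e z →
        ¬∃ w ∈ returnOrbit lam z, ∃ m n : ℤ, Rfl w = (m, n) ∧
          (Rfl ((Fl lam)^[4] w)).1 ≠ m ∧ (Rfl ((Fl lam)^[4] w)).2 ≠ n := by
  have hpos : (0 : ℝ) < 4 * (nextE e + 4) := by positivity
  refine ⟨1 / (4 * (nextE e + 4)), by positivity, ?_⟩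
  rintro lam hlam hlam₀ z ⟨⟨⟨hz, -⟩, hHam⟩, -, hdisjoint⟩ ⟨w, hw, m, n, hRw, hm, hn⟩
  have hsmall : 4 * lam * ((nextE e + 1) + 3) < 1 := by
    rw [lt_div_iff₀ hpos] at hlam₀; linarith
  obtain ⟨hx, hy⟩ := abs_le_of_Ham_lt (hHam w hw).2
  have hw_lattice : IsLatticePt lam w := by
    obtain ⟨k, -, -, rfl⟩ := hw
    exact hz.flIter k
  simp only [Rfl, Prod.mk.injEq] at hRw hm hn
  have hw_sigma := mem_SigmaSet_of_critical hlam hsmall hx hy hw_lattice (hRw.1 ▸ hm) (hRw.2 ▸ hn)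
  exact Set.eq_empty_iff_forall_notMem.mp hdisjoint w ⟨hw, hw_sigma⟩

/-- **Proposition** (regular points have non-critical orbits). -/
theorem regular_points_noncritical_orbits (e : ℕ) (he : e ∈ Eset) :
    ∃ lam0 > (0 : ℝ), ∀ lam : ℝ, 0 < lam → lam < lam0 →
      ∀ z : ℝ × ℝ, IsRegularPt lam e z →
        ¬∃ w ∈ returnOrbit lam z, ∃ m n : ℤ, Rfl w = (m, n) ∧
          (Rfl ((Fl lam)^[4] w)).1 ≠ m ∧ (Rfl ((Fl lam)^[4] w)).2 ≠ n :=
  regular_points_noncritical_orbits_general e
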